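/- arXiv:solv-int/9905010 — 2 statements merged into one kernel-verified Lean document; each statement's English description precedes it below -/
import Mathlib

section
/- Let (uₙ)_{n≥0} be a sequence of polynomials in x whose coefficients are real-analytic functions of t with all Taylor coefficients about t = 0 nonnegative, satisfying the KP recursion (n+2)(n+1) u_{n+2} = ∂⁴uₙ/∂x⁴ + Σ_{j=0}^{n} ∂/∂x (u_j · ∂u_{n−j}/∂x) + ∂²uₙ/∂t∂x. Suppose u₀ and u₁ have x-degrees d₀ and d₁ with 3d₀ < 2d₁ + 2 and d₁ ≥ 3, and that for some 0 < ε < 1 the leading x-coefficient of u₁ satisfies c_{1,0}(t) > ε for all t > 0. Then for all n ≥ 0 and all t > 0, the leading x-coefficient of u_{3n+1} satisfies c_{3n+1,0}(t) > ε^{n+1}. -/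
open Polynomial Finset

/- iterated deriv composition -/
lemma iterDeriv_comp (f : ℝ → ℝ) (m k : ℕ) :
    iteratedDeriv k (iteratedDeriv m f) = iteratedDeriv (m + k) f := by
  induction k with
  | zero => simp
  | succ k ih => rw [iteratedDeriv_succ, ih, ← iteratedDeriv_succ]; congr 1

/- deriv has power series on the same ball -/
lemma hasBall_deriv {f : ℝ → ℝ} {p : FormalMultilinearSeries ℝ ℝ ℝ} {a : ℝ} {r : ENNReal}
    (h : HasFPowerSeriesOnBall f p a r) :
    ∃ q : FormalMultilinearSeries ℝ ℝ ℝ, HasFPowerSeriesOnBall (deriv f) q a r := by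
  have h2 := (ContinuousLinearMap.apply ℝ ℝ (1:ℝ)).comp_hasFPowerSeriesOnBall h.fderiv
  exact ⟨_, h2⟩

lemma hasBall_iteratedDeriv {f : ℝ → ℝ} {p : FormalMultilinearSeries ℝ ℝ ℝ} {a : ℝ} {r : ENNReal}
    (h : HasFPowerSeriesOnBall f p a r) (m : ℕ) :
    ∃ q : FormalMultilinearSeries ℝ ℝ ℝ, HasFPowerSeriesOnBall (iteratedDeriv m f) q a r := by
  induction m with
  | zero => exact ⟨p, by simpa using h⟩
  | succ m ih =>
    obtain ⟨q, hq⟩ := ih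
    rw [iteratedDeriv_succ]
    exact hasBall_deriv hq

lemma nonneg_on_ball {g : ℝ → ℝ} {q : FormalMultilinearSeries ℝ ℝ ℝ} {a : ℝ} {r : ENNReal}
    (h : HasFPowerSeriesOnBall g q a r) (hd : ∀ k, 0 ≤ iteratedDeriv k g a)
    {y : ℝ} (hy0 : 0 ≤ y) (hyr : (‖y‖₊ : ENNReal) < r) : 0 ≤ g (a + y) := by
  have hy : y ∈ Metric.eball (0:ℝ) r := by
    simpa [Metric.mem_eball, edist_eq_enorm_sub, enorm_eq_nnnorm] using hyr
  have hs := h.hasSum_iteratedFDeriv hy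
  refine hasSum_le (fun n => ?_) hasSum_zero hs
  rw [iteratedFDeriv_apply_eq_iteratedDeriv_mul_prod]
  simp only [Finset.prod_const, Finset.card_univ, Fintype.card_fin, smul_eq_mul]
  have := hd n
  positivity

lemma iteratedDeriv_nonneg_of_taylor (f : ℝ → ℝ) (hf : ∀ t : ℝ, AnalyticAt ℝ f t)
    (h0 : ∀ m, 0 ≤ iteratedDeriv m f 0) :
    ∀ t : ℝ, 0 ≤ t → ∀ m, 0 ≤ iteratedDeriv m f t := by
  intro t ht m
  set S : Set ℝ := {x | ∀ k, 0 ≤ iteratedDeriv k f x} with hS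
  have hAnOn : AnalyticOnNhd ℝ f Set.univ := fun x _ => hf x
  have hcont : ∀ k, Continuous (iteratedDeriv k f) := by
    intro k
    rw [iteratedDeriv_eq_iterate]
    exact continuous_iff_continuousAt.2 fun x =>
      ((hAnOn.iterated_deriv k) x (Set.mem_univ x)).continuousAt
  have hSclosed : IsClosed S := by
    have : S = ⋂ k, (iteratedDeriv k f) ⁻¹' Set.Ici 0 := by
      ext x; simp [hS, Set.mem_iInter]
    rw [this]
    exact isClosed_iInter fun k => (isClosed_Ici).preimage (hcont k)
  have key : Set.Icc (0:ℝ) t ⊆ S := by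
    refine IsClosed.Icc_subset_of_forall_exists_gt (hSclosed.inter isClosed_Icc)
      (fun k => h0 k) ?_
    rintro x ⟨hxS, _⟩ y hxy
    obtain ⟨p, hp⟩ := hf x
    obtain ⟨r, hr⟩ := hp
    have hrpos : 0 < r := hr.r_pos
    -- find a small ε ball inside EMetric ball
    have hball : Metric.eball x r ∈ nhds x := Metric.eball_mem_nhds x hrpos
    obtain ⟨δ, hδ0, hδball⟩ := Metric.mem_nhds_iff.1 hball
    set z : ℝ := x + min (δ/2) (y - x) with hz
    have hyx : 0 < y - x := by simpa using hxy
    have hzpos : 0 < min (δ/2) (y - x) := lt_min (by linarith) hyx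
    refine ⟨z, ?_, ?_⟩
    · -- z ∈ S
      intro k
      obtain ⟨q, hq⟩ := hasBall_iteratedDeriv hr k
      refine nonneg_on_ball hq (fun j => ?_) hzpos.le ?_
      · rw [iterDeriv_comp]; exact hxS _
      · have hmem : z ∈ Metric.ball x δ := by
          simp only [Metric.mem_ball, hz, Real.dist_eq, add_sub_cancel_left]
          rw [abs_of_nonneg hzpos.le]
          exact lt_of_le_of_lt (min_le_left _ _) (by linarith)
        have := hδball hmem
        simpa [Metric.mem_eball, edist_eq_enorm_sub, enorm_eq_nnnorm, hz] using this
    · constructor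
      · simp only [hz]; linarith [hzpos]
      · simp only [hz]
        have : min (δ/2) (y - x) ≤ y - x := min_le_right _ _
        linarith
  exact key ⟨ht, le_rfl⟩ m

lemma deriv_coeff_nonneg {p : Polynomial ℝ} (hp : ∀ k, 0 ≤ p.coeff k) (k : ℕ) :
    0 ≤ (Polynomial.derivative p).coeff k := by
  rw [Polynomial.coeff_derivative]
  have := hp (k + 1)
  positivity

lemma mul_coeff_nonneg {p r : Polynomial ℝ} (hp : ∀ k, 0 ≤ p.coeff k)
    (hr : ∀ k, 0 ≤ r.coeff k) (k : ℕ) : 0 ≤ (p * r).coeff k := by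
  rw [Polynomial.coeff_mul]
  exact Finset.sum_nonneg fun x _ => mul_nonneg (hp _) (hr _)

lemma gauss_sum_w (q : ℕ) : ∀ m : ℕ,
    2 * (∑ i ∈ Finset.range m, ((m - i) * q + q + 2)) = q * m * (m + 1) + 2 * m * (q + 2) := by
  intro m
  induction m with
  | zero => simp
  | succ m ih =>
    rw [Finset.sum_range_succ']
    have hcong : ∀ i ∈ Finset.range m, ((m + 1 - (i + 1)) * q + q + 2) = ((m - i) * q + q + 2) := by
      intro i hi
      have : m + 1 - (i + 1) = m - i := by omega
      rw [this]
    rw [Finset.sum_congr rfl hcong]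
    simp only [Nat.sub_zero]
    rw [mul_add, ih]
    ring

noncomputable def kpLam : ℕ → ℝ := fun i => if i = 0 then 1 else 5/4

lemma kpLam_zero : kpLam 0 = 1 := rfl
lemma kpLam_succ (i : ℕ) : kpLam (i + 1) = 5/4 := rfl
lemma kpLam_pos (i : ℕ) : 0 < kpLam i := by
  cases i <;> norm_num [kpLam]
lemma kpLam_ge_one (i : ℕ) : 1 ≤ kpLam i := by
  cases i <;> norm_num [kpLam]

lemma key_numeric (q m : ℕ) (hq : 1 ≤ q) :
    ((3 * m + 4) * (3 * m + 3) : ℝ) * kpLam (m + 1) ≤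
      (((m + 2) * q + 3 : ℕ) : ℝ) *
        ∑ i ∈ Finset.range (m + 1), kpLam i * (((m - i) * q + q + 2 : ℕ) : ℝ) * kpLam (m - i) := by
  have hq' : (1 : ℝ) ≤ (q : ℝ) := by exact_mod_cast hq
  cases m with
  | zero =>
    rw [Finset.sum_range_one]
    simp only [Nat.sub_zero, Nat.zero_mul, kpLam_zero, kpLam_succ]
    push_cast
    nlinarith [mul_nonneg (sub_nonneg.2 hq') (sub_nonneg.2 hq')]
  | succ m =>
    rw [Finset.sum_range_succ, Finset.sum_range_succ']
    have hcong : ∀ i ∈ Finset.range m,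
        kpLam (i + 1) * (((m + 1 - (i + 1)) * q + q + 2 : ℕ) : ℝ) * kpLam (m + 1 - (i + 1))
          = (5/4) * (((m - i) * q + q + 2 : ℕ) : ℝ) * (5/4) := by
      intro i hi
      have h1 : m + 1 - (i + 1) = m - i := by omega
      have h2 : m - i ≠ 0 := by simp at hi; omega
      rw [kpLam_succ, h1]
      have : kpLam (m - i) = 5/4 := by simp [kpLam, h2]
      rw [this]
    rw [Finset.sum_congr rfl hcong]
    have hsum : (∑ i ∈ Finset.range m, (5/4) * (((m - i) * q + q + 2 : ℕ) : ℝ) * (5/4))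
        = (25/16) * ((∑ i ∈ Finset.range m, ((m - i) * q + q + 2) : ℕ) : ℝ) := by
      rw [Nat.cast_sum, Finset.mul_sum]
      exact Finset.sum_congr rfl fun i _ => by ring
    rw [hsum]
    have hg : (2 : ℝ) * ((∑ i ∈ Finset.range m, ((m - i) * q + q + 2) : ℕ) : ℝ)
        = (q : ℝ) * m * (m + 1) + 2 * m * ((q : ℝ) + 2) := by
      exact_mod_cast congrArg (Nat.cast (R := ℝ)) (gauss_sum_w q m)
    rw [kpLam_succ, kpLam_zero]
    simp only [Nat.sub_self, Nat.sub_zero, kpLam_zero, kpLam_succ]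
    generalize hSS : ((∑ i ∈ Finset.range m, ((m - i) * q + q + 2) : ℕ) : ℝ) = S at hg ⊢
    push_cast
    set Q := (q : ℝ) with hQdef
    set M := (m : ℝ) with hMdef
    have hM : 0 ≤ M := Nat.cast_nonneg m
    have ha : 0 ≤ Q - 1 := by linarith
    nlinarith [hg, mul_nonneg ha hM, mul_nonneg (mul_nonneg ha hM) hM,
      mul_nonneg (mul_nonneg (mul_nonneg ha hM) hM) hM,
      mul_nonneg ha ha, mul_nonneg (mul_nonneg ha ha) hM,
      mul_nonneg (mul_nonneg (mul_nonneg ha ha) hM) hM,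
      mul_nonneg (mul_nonneg (mul_nonneg (mul_nonneg ha ha) hM) hM) hM,
      hM, mul_nonneg hM hM, mul_nonneg (mul_nonneg hM hM) hM]

/-- **Coefficient growth for the KP recursion, case `3d₀ < 2d₁ + 2` (Lemma 3.4(ii)).**
For polynomials `uₙ` in `x` whose coefficients are real-analytic functions of `t`
with nonnegative Taylor coefficients at `t = 0`, satisfying the KP recursion,
if `u₀, u₁` have `x`-degrees `d₀, d₁` with `3d₀ < 2d₁ + 2`, `d₁ ≥ 3`, and for all
`t > 0` the leading coefficient of `u₁` satisfies `c_{1,0}(t) > ε` for some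
`0 < ε < 1`, then for all `n` and `t > 0`, `c_{3n+1,0}(t) > ε^{n+1}` (here
`c_{3n+1,0}` is the coefficient of `x^{n(d₁-2)+d₁}` in `u_{3n+1}`). -/
theorem kp_recursion_leading_coeff_case_two
    (u : ℕ → ℝ → Polynomial ℝ)
    (hanalytic : ∀ n k, ∀ t : ℝ, AnalyticAt ℝ (fun s => (u n s).coeff k) t)
    (htaylor : ∀ n k m, 0 ≤ iteratedDeriv m (fun s => (u n s).coeff k) 0)
    (hrec : ∀ n : ℕ, ∀ t : ℝ, ∀ k : ℕ,
      ((n : ℝ) + 2) * ((n : ℝ) + 1) * (u (n + 2) t).coeff k =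
        (Polynomial.derivative (Polynomial.derivative (Polynomial.derivative
            (Polynomial.derivative (u n t))))).coeff k
          + (∑ j ∈ Finset.range (n + 1),
              Polynomial.derivative (u j t * Polynomial.derivative (u (n - j) t))).coeff k
          + deriv (fun s => (Polynomial.derivative (u n s)).coeff k) t)
    (d₀ d₁ : ℕ)
    (hdeg0 : ∀ t : ℝ, 0 < t → (u 0 t).natDegree = d₀)
    (hdeg1 : ∀ t : ℝ, 0 < t → (u 1 t).natDegree = d₁)
    (hcase : 3 * d₀ < 2 * d₁ + 2) (hd₁ : 3 ≤ d₁)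
    (ε : ℝ) (hε0 : 0 < ε) (hε1 : ε < 1)
    (hlead1 : ∀ t : ℝ, 0 < t → ε < (u 1 t).coeff d₁) :
    ∀ n : ℕ, ∀ t : ℝ, 0 < t →
      ε ^ (n + 1) < (u (3 * n + 1) t).coeff (n * (d₁ - 2) + d₁) := by
  have hcoeff : ∀ n k (t : ℝ), 0 ≤ t → 0 ≤ (u n t).coeff k := by
    intro n k t ht
    have h := iteratedDeriv_nonneg_of_taylor _ (hanalytic n k) (htaylor n k) t ht 0
    simpa using h
  have hdcoeff : ∀ n k (t : ℝ), 0 ≤ t → 0 ≤ deriv (fun s => (u n s).coeff k) t := by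
    intro n k t ht
    have h := iteratedDeriv_nonneg_of_taylor _ (hanalytic n k) (htaylor n k) t ht 1
    simpa [iteratedDeriv_one] using h
  obtain ⟨q, hq1, rfl⟩ : ∃ q, 1 ≤ q ∧ d₁ = q + 2 := ⟨d₁ - 2, by omega, by omega⟩
  have hqsub : q + 2 - 2 = q := by omega
  simp only [hqsub]
  have main : ∀ n : ℕ, ∀ t : ℝ, 0 < t →
      kpLam n * ε ^ (n + 1) < (u (3 * n + 1) t).coeff (n * q + (q + 2)) := by
    intro n
    induction n using Nat.strong_induction_on with
    | _ n IH =>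
      cases n with
      | zero =>
        intro t ht
        simpa [kpLam_zero] using hlead1 t ht
      | succ m =>
        intro t ht
        set N : ℕ := 3 * m + 2 with hN
        set K : ℕ := (m + 1) * q + (q + 2) with hK
        have hrw : 3 * (m + 1) + 1 = N + 2 := by omega
        rw [hrw]
        have hrec' := hrec N t K
        -- nonnegativity of the three terms
        have hAnn : 0 ≤ (Polynomial.derivative (Polynomial.derivative (Polynomial.derivative
            (Polynomial.derivative (u N t))))).coeff K := by
          have h0 : ∀ k, 0 ≤ (u N t).coeff k := fun k => hcoeff N k t ht.le
          exact deriv_coeff_nonneg (deriv_coeff_nonneg (deriv_coeff_nonneg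
            (deriv_coeff_nonneg h0))) K
        have hCnn : 0 ≤ deriv (fun s => (Polynomial.derivative (u N s)).coeff K) t := by
          have hfun : (fun s => (Polynomial.derivative (u N s)).coeff K)
              = fun s => (u N s).coeff (K + 1) * ((K : ℝ) + 1) := by
            funext s; rw [Polynomial.coeff_derivative]
          rw [hfun, deriv_mul_const ((hanalytic N (K + 1) t).differentiableAt)]
          exact mul_nonneg (hdcoeff N (K + 1) t ht.le) (by positivity)
        -- rewrite the sum term coefficientwise
        have hBsum : (∑ j ∈ Finset.range (N + 1),
              Polynomial.derivative (u j t * Polynomial.derivative (u (N - j) t))).coeff K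
            = ∑ j ∈ Finset.range (N + 1),
                (u j t * Polynomial.derivative (u (N - j) t)).coeff (K + 1) * ((K : ℝ) + 1) := by
          rw [Polynomial.finset_sum_coeff]
          exact Finset.sum_congr rfl fun j _ => Polynomial.coeff_derivative _ _
        have hgnn : ∀ j : ℕ,
            0 ≤ (u j t * Polynomial.derivative (u (N - j) t)).coeff (K + 1) * ((K : ℝ) + 1) := by
          intro j
          refine mul_nonneg (mul_coeff_nonneg (fun k => hcoeff j k t ht.le)
            (fun k => deriv_coeff_nonneg (fun k' => hcoeff (N - j) k' t ht.le) k) (K + 1))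
            (by positivity)
        -- restrict the sum to indices j = 3i+1
        have hsub : ∑ i ∈ Finset.range (m + 1),
              (u (3 * i + 1) t * Polynomial.derivative (u (N - (3 * i + 1)) t)).coeff (K + 1)
                * ((K : ℝ) + 1)
            ≤ ∑ j ∈ Finset.range (N + 1),
                (u j t * Polynomial.derivative (u (N - j) t)).coeff (K + 1) * ((K : ℝ) + 1) := by
          have himg : ∑ j ∈ (Finset.range (m + 1)).image (fun i => 3 * i + 1),
                  (u j t * Polynomial.derivative (u (N - j) t)).coeff (K + 1) * ((K : ℝ) + 1)
              = ∑ i ∈ Finset.range (m + 1),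
                (u (3 * i + 1) t * Polynomial.derivative (u (N - (3 * i + 1)) t)).coeff (K + 1)
                  * ((K : ℝ) + 1) :=
            Finset.sum_image (by intro a _ b _ h; simp only at h; omega)
          rw [← himg]
          refine Finset.sum_le_sum_of_subset_of_nonneg ?_ (fun j _ _ => hgnn j)
          intro j hj
          simp only [Finset.mem_image, Finset.mem_range] at hj ⊢
          obtain ⟨i, hi, rfl⟩ := hj
          omega
        -- per-term lower bound via a single antidiagonal term
        have hterm : ∀ i ∈ Finset.range (m + 1),
            ((K : ℝ) + 1) * ((u (3 * i + 1) t).coeff (i * q + (q + 2)) *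
              ((((m - i) * q + q + 2 : ℕ) : ℝ) *
                (u (3 * (m - i) + 1) t).coeff ((m - i) * q + (q + 2))))
            ≤ (u (3 * i + 1) t * Polynomial.derivative (u (N - (3 * i + 1)) t)).coeff (K + 1)
                * ((K : ℝ) + 1) := by
          intro i hi
          have him : i ≤ m := by simpa [Nat.lt_succ_iff] using hi
          obtain ⟨a, rfl⟩ : ∃ a, m = i + a := ⟨m - i, by omega⟩
          simp only [Nat.add_sub_cancel_left]
          have hNi : N - (3 * i + 1) = 3 * a + 1 := by omega
          rw [hNi, Polynomial.coeff_mul]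
          have hmem : ((i * q + (q + 2), a * q + q + 1) : ℕ × ℕ)
              ∈ Finset.HasAntidiagonal.antidiagonal (K + 1) := by
            rw [Finset.HasAntidiagonal.mem_antidiagonal, hK]; ring
          have hsingle := Finset.single_le_sum
            (f := fun x : ℕ × ℕ => (u (3 * i + 1) t).coeff x.1 *
              (Polynomial.derivative (u (3 * a + 1) t)).coeff x.2)
            (fun x _ => mul_nonneg (hcoeff _ _ t ht.le)
              (deriv_coeff_nonneg (fun k' => hcoeff _ k' t ht.le) _)) hmem
          simp only at hsingle
          rw [Polynomial.coeff_derivative] at hsingle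
          have e1 : a * q + q + 1 + 1 = a * q + (q + 2) := by ring
          rw [e1] at hsingle
          have e2 : ((a * q + q + 1 : ℕ) : ℝ) + 1 = ((a * q + q + 2 : ℕ) : ℝ) := by
            push_cast; ring
          rw [e2] at hsingle
          have hKnn : (0 : ℝ) ≤ (K : ℝ) + 1 := by positivity
          refine le_trans (le_of_eq (by ring))
            (mul_le_mul_of_nonneg_right hsingle hKnn)
        -- strict lower bound using the induction hypothesis
        have hlow : ∑ i ∈ Finset.range (m + 1),
              ((K : ℝ) + 1) * ((kpLam i * ε ^ (i + 1)) *
                ((((m - i) * q + q + 2 : ℕ) : ℝ) * (kpLam (m - i) * ε ^ (m - i + 1))))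
            < ∑ i ∈ Finset.range (m + 1),
              ((K : ℝ) + 1) * ((u (3 * i + 1) t).coeff (i * q + (q + 2)) *
                ((((m - i) * q + q + 2 : ℕ) : ℝ) *
                  (u (3 * (m - i) + 1) t).coeff ((m - i) * q + (q + 2)))) := by
          refine Finset.sum_lt_sum_of_nonempty Finset.nonempty_range_add_one ?_
          intro i hi
          have hi' : i < m + 1 := Finset.mem_range.1 hi
          have h1 := IH i (by omega) t ht
          have h2 := IH (m - i) (by omega) t ht
          have hL1 : 0 < kpLam i * ε ^ (i + 1) := by
            have := kpLam_pos i; positivity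
          have hL2 : 0 < kpLam (m - i) * ε ^ (m - i + 1) := by
            have := kpLam_pos (m - i); positivity
          have hw : (0 : ℝ) < (((m - i) * q + q + 2 : ℕ) : ℝ) := by
            exact_mod_cast Nat.succ_pos ((m - i) * q + q + 1)
          have hKpos : (0 : ℝ) < (K : ℝ) + 1 := by positivity
          refine mul_lt_mul_of_pos_left ?_ hKpos
          exact mul_lt_mul'' h1 (mul_lt_mul_of_pos_left h2 hw) hL1.le
            (mul_nonneg hw.le hL2.le)
        -- identify the lower sum with the numeric sum
        have hiden : ∑ i ∈ Finset.range (m + 1),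
              ((K : ℝ) + 1) * ((kpLam i * ε ^ (i + 1)) *
                ((((m - i) * q + q + 2 : ℕ) : ℝ) * (kpLam (m - i) * ε ^ (m - i + 1))))
            = ε ^ (m + 2) * ((((m + 2) * q + 3 : ℕ) : ℝ) *
                ∑ i ∈ Finset.range (m + 1),
                  kpLam i * (((m - i) * q + q + 2 : ℕ) : ℝ) * kpLam (m - i)) := by
          rw [Finset.mul_sum, Finset.mul_sum]
          refine Finset.sum_congr rfl fun i hi => ?_
          have him : i ≤ m := by simpa [Nat.lt_succ_iff] using hi
          have hpow : ε ^ (i + 1) * ε ^ (m - i + 1) = ε ^ (m + 2) := by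
            rw [← pow_add]; congr 1; omega
          have hK1 : ((K : ℕ) : ℝ) + 1 = (((m + 2) * q + 3 : ℕ) : ℝ) := by
            rw [hK]; push_cast; ring
          rw [hK1]
          calc (((m + 2) * q + 3 : ℕ) : ℝ) * ((kpLam i * ε ^ (i + 1)) *
                ((((m - i) * q + q + 2 : ℕ) : ℝ) * (kpLam (m - i) * ε ^ (m - i + 1))))
              = (((m + 2) * q + 3 : ℕ) : ℝ) *
                  (kpLam i * (((m - i) * q + q + 2 : ℕ) : ℝ) * kpLam (m - i)) *
                  (ε ^ (i + 1) * ε ^ (m - i + 1)) := by ring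
            _ = ε ^ (m + 2) * ((((m + 2) * q + 3 : ℕ) : ℝ) *
                  (kpLam i * (((m - i) * q + q + 2 : ℕ) : ℝ) * kpLam (m - i))) := by
                rw [hpow]; ring
        have hnum := key_numeric q m hq1
        have hnum' : ε ^ (m + 2) * (((3 * m + 4) * (3 * m + 3) : ℝ) * kpLam (m + 1))
            ≤ ε ^ (m + 2) * ((((m + 2) * q + 3 : ℕ) : ℝ) *
                ∑ i ∈ Finset.range (m + 1),
                  kpLam i * (((m - i) * q + q + 2 : ℕ) : ℝ) * kpLam (m - i)) :=
          mul_le_mul_of_nonneg_left hnum (by positivity)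
        have hNcast : ((N : ℕ) : ℝ) = 3 * (m : ℝ) + 2 := by rw [hN]; push_cast; ring
        have hbig : ((3 * (m : ℝ) + 4) * (3 * (m : ℝ) + 3)) * (kpLam (m + 1) * ε ^ (m + 2))
            < ((3 * (m : ℝ) + 4) * (3 * (m : ℝ) + 3)) * (u (N + 2) t).coeff K := by
          rw [hBsum] at hrec'
          rw [hNcast] at hrec'
          nlinarith [hrec', hAnn, hCnn, hsub, Finset.sum_le_sum hterm, hlow, hiden, hnum']
        have hpos2 : (0 : ℝ) < (3 * (m : ℝ) + 4) * (3 * (m : ℝ) + 3) := by positivity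
        have := (mul_lt_mul_iff_right₀ hpos2).1 hbig
        calc kpLam (m + 1) * ε ^ (m + 1 + 1) = kpLam (m + 1) * ε ^ (m + 2) := by norm_num
          _ < (u (N + 2) t).coeff K := this
  intro n t ht
  have h := main n t ht
  have h1 : ε ^ (n + 1) ≤ kpLam n * ε ^ (n + 1) :=
    le_mul_of_one_le_left (by positivity) (kpLam_ge_one n)
  linarith
end

section
/- Let (uₙ)_{n≥0} be a sequence of polynomials in x whose coefficients are real-analytic functions of t with all Taylor coefficients about t = 0 nonnegative, satisfying the KP recursion (n+2)(n+1) u_{n+2} = ∂⁴uₙ/∂x⁴ + Σ_{j=0}^{n} ∂/∂x (u_j · ∂u_{n−j}/∂x) + ∂²uₙ/∂t∂x. Suppose u₀, u₁ have x-degrees d₀, d₁ with 3d₀ ≥ 2d₁ + 2 and d₀ ≥ 3, and for some 0 < ε < 1 the leading x-coefficients satisfy c_{0,0}(t) > ε and c_{1,0}(t) > ε for all t > 0. Then for every positive integer q and all t > 0, the coefficient c_{10q, q(d₀+2)}(t) of x^{d_{10q} − q(d₀+2)} in u_{10q} satisfies c_{10q, q(d₀+2)}(t) > [(4q(d₀−2)+d₀)!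 · (8q)!] / [(4q(d₀−3)+d₀)! · (10q)!] · ε^{4q+1}. In particular these coefficients grow factorially in q, so the formal series Σ uₙ yⁿ diverges. -/
open Polynomial Finset Set ENNReal

private lemma kp_deriv_series {f : ℝ → ℝ} {p : FormalMultilinearSeries ℝ ℝ ℝ} {x : ℝ}
    {r : ℝ≥0∞} (h : HasFPowerSeriesOnBall f p x r) :
    ∃ q : FormalMultilinearSeries ℝ ℝ ℝ, HasFPowerSeriesOnBall (deriv f) q x r := by
  refine ⟨(ContinuousLinearMap.apply ℝ ℝ (1:ℝ)).compFormalMultilinearSeries p.derivSeries, ?_⟩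
  have := (ContinuousLinearMap.apply ℝ ℝ (1:ℝ)).comp_hasFPowerSeriesOnBall h.fderiv
  exact this

private lemma kp_iteratedDeriv_series {f : ℝ → ℝ} {p : FormalMultilinearSeries ℝ ℝ ℝ} {x : ℝ}
    {r : ℝ≥0∞} (h : HasFPowerSeriesOnBall f p x r) (m : ℕ) :
    ∃ q : FormalMultilinearSeries ℝ ℝ ℝ, HasFPowerSeriesOnBall (iteratedDeriv m f) q x r := by
  induction m with
  | zero => exact ⟨p, by simpa using h⟩
  | succ m ih =>
    obtain ⟨q, hq⟩ := ih
    rw [iteratedDeriv_succ]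
    exact kp_deriv_series hq

private lemma kp_iteratedDeriv_iteratedDeriv (f : ℝ → ℝ) (k m : ℕ) :
    iteratedDeriv k (iteratedDeriv m f) = iteratedDeriv (k + m) f := by
  rw [iteratedDeriv_eq_iterate, iteratedDeriv_eq_iterate, iteratedDeriv_eq_iterate,
    Function.iterate_add]
  rfl

private lemma kp_local_nonneg {f : ℝ → ℝ} {p : FormalMultilinearSeries ℝ ℝ ℝ} {x : ℝ}
    {r : ℝ≥0∞} (h : HasFPowerSeriesOnBall f p x r)
    (hpos : ∀ m, 0 ≤ iteratedDeriv m f x) {y : ℝ} (hy0 : 0 ≤ y)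
    (hy : ENNReal.ofReal y < r) (m : ℕ) : 0 ≤ iteratedDeriv m f (x + y) := by
  obtain ⟨q, hq⟩ := kp_iteratedDeriv_series h m
  have hmem : y ∈ Metric.eball (0 : ℝ) r := by
    simp only [Metric.mem_eball, edist_zero_right]
    rw [← Real.enorm_eq_ofReal hy0] at hy
    exact hy
  have hs := hq.hasSum_iteratedFDeriv hmem
  refine hasSum_le (f := fun _ => (0 : ℝ)) ?_ hasSum_zero hs
  intro k
  have : iteratedFDeriv ℝ k (iteratedDeriv m f) x (fun _ => y)
      = y ^ k * iteratedDeriv (k + m) f x := by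
    rw [iteratedFDeriv_apply_eq_iteratedDeriv_mul_prod,
      kp_iteratedDeriv_iteratedDeriv]
    simp [smul_eq_mul]
  rw [this, smul_eq_mul]
  have := hpos (k + m)
  positivity

private lemma kp_global_nonneg {f : ℝ → ℝ} (hf : ∀ t, AnalyticAt ℝ f t)
    (h0 : ∀ m, 0 ≤ iteratedDeriv m f 0) {t : ℝ} (ht : 0 ≤ t) (m : ℕ) :
    0 ≤ iteratedDeriv m f t := by
  have hAd : ∀ m, ∀ x : ℝ, AnalyticAt ℝ (iteratedDeriv m f) x := by
    intro m
    induction m with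
    | zero => simpa using hf
    | succ m ih =>
      intro x
      rw [iteratedDeriv_succ]
      exact (AnalyticOnNhd.deriv (s := Set.univ) (fun y _ => ih y)) x (Set.mem_univ x)
  set S : Set ℝ := {x | ∀ m, 0 ≤ iteratedDeriv m f x} with hSdef
  have hclosed : IsClosed S := by
    have : S = ⋂ m, (iteratedDeriv m f) ⁻¹' (Set.Ici 0) := by
      ext x; simp [hSdef, Set.mem_iInter]
    rw [this]
    refine isClosed_iInter fun m => IsClosed.preimage ?_ isClosed_Ici
    exact continuous_iff_continuousAt.2 fun x => (hAd m x).continuousAt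
  have key : Set.Icc (0:ℝ) t ⊆ S := by
    refine IsClosed.Icc_subset_of_forall_exists_gt (hclosed.inter isClosed_Icc) h0 ?_
    rintro x ⟨hxS, hx0, hxt⟩ y hy
    obtain ⟨p, r, hp⟩ := hf x
    obtain ⟨r', hr'0, hr'⟩ := exists_between hp.r_pos
    have hr't : r' ≠ ⊤ := hr'.ne_top
    set δ : ℝ := r'.toReal with hδdef
    have hδ0 : 0 < δ := ENNReal.toReal_pos hr'0.ne' hr't
    set z : ℝ := min y (x + δ / 2) with hzdef
    have hzx : x < z := lt_min hy (by linarith)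
    refine ⟨z, ?_, hzx, min_le_left _ _⟩
    have hzle : z - x ≤ δ / 2 := by
      have : z ≤ x + δ / 2 := min_le_right _ _
      linarith
    have hz0 : 0 ≤ z - x := by linarith
    have : z = x + (z - x) := by ring
    rw [hSdef]
    intro m
    rw [this]
    refine kp_local_nonneg hp hxS hz0 ?_ m
    calc ENNReal.ofReal (z - x) ≤ ENNReal.ofReal (δ / 2) := ENNReal.ofReal_le_ofReal hzle
    _ < r' := by
        rw [← ENNReal.ofReal_toReal hr't]
        exact ENNReal.ofReal_lt_ofReal_iff (by positivity) |>.2 (by linarith)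
    _ < r := hr'
  exact key ⟨le_refl 0 |>.trans ht |>.trans (le_refl t) |> fun _ => ht, le_refl t⟩ m

private lemma kp_deriv_coeff_nonneg {p : Polynomial ℝ} (hp : ∀ i, 0 ≤ p.coeff i) (i : ℕ) :
    0 ≤ (derivative p).coeff i := by
  rw [Polynomial.coeff_derivative]
  have := hp (i + 1)
  positivity

private lemma kp_mul_coeff_nonneg {p q : Polynomial ℝ} (hp : ∀ i, 0 ≤ p.coeff i)
    (hq : ∀ i, 0 ≤ q.coeff i) (i : ℕ) : 0 ≤ (p * q).coeff i := by
  rw [Polynomial.coeff_mul]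
  exact Finset.sum_nonneg fun x _ => mul_nonneg (hp x.1) (hq x.2)

private lemma kp_mul_coeff_lb {p q : Polynomial ℝ} (hp : ∀ i, 0 ≤ p.coeff i)
    (hq : ∀ i, 0 ≤ q.coeff i) (a b : ℕ) : p.coeff a * q.coeff b ≤ (p * q).coeff (a + b) := by
  rw [Polynomial.coeff_mul]
  exact Finset.single_le_sum (f := fun x : ℕ × ℕ => p.coeff x.1 * q.coeff x.2)
    (fun x _ => mul_nonneg (hp x.1) (hq x.2))
    (Finset.HasAntidiagonal.mem_antidiagonal.2 (rfl : (a, b).1 + (a, b).2 = a + b))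

private lemma kp_coeff_d4 (p : Polynomial ℝ) (k : ℕ) :
    (derivative (derivative (derivative (derivative p)))).coeff k
      = p.coeff (k + 4) * (((k:ℝ) + 1) * ((k:ℝ) + 2) * ((k:ℝ) + 3) * ((k:ℝ) + 4)) := by
  simp only [Polynomial.coeff_derivative]
  push_cast
  ring_nf

private lemma kp_evenB
    (u : ℕ → ℝ → Polynomial ℝ) (d₀ : ℕ) (hd₀ : 3 ≤ d₀) (ε : ℝ) (hε0 : 0 < ε)
    (t : ℝ)
    (hrec : ∀ n : ℕ, ∀ k : ℕ,
      ((n : ℝ) + 2) * ((n : ℝ) + 1) * (u (n + 2) t).coeff k =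
        (derivative (derivative (derivative (derivative (u n t))))).coeff k
          + (∑ j ∈ Finset.range (n + 1),
              derivative (u j t * derivative (u (n - j) t))).coeff k
          + deriv (fun s => (derivative (u n s)).coeff k) t)
    (hnn : ∀ n k, 0 ≤ (u n t).coeff k)
    (hdC : ∀ n k, 0 ≤ deriv (fun s => (derivative (u n s)).coeff k) t)
    (hl0 : ε < (u 0 t).coeff d₀) :
    ∀ n : ℕ, ε ^ (n + 1) < (u (2 * n) t).coeff (n * (d₀ - 2) + d₀) := by
  intro n
  induction n using Nat.strong_induction_on with
  | _ n IH =>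
  match n, IH with
  | 0, _ => simpa using hl0
  | (n+1), IH =>
    set c := d₀ - 2 with hcdef
    have hc1 : 1 ≤ c := by omega
    have hd₀c : d₀ = c + 2 := by omega
    set k := (n + 1) * c + d₀ with hkdef
    -- the three terms
    have hrk := hrec (2 * n) k
    set A := (derivative (derivative (derivative (derivative (u (2*n) t))))).coeff k with hA
    set C := deriv (fun s => (derivative (u (2*n) s)).coeff k) t with hC
    have hA0 : 0 ≤ A := by
      rw [hA, kp_coeff_d4]
      have := hnn (2*n) (k+4)
      positivity
    have hC0 : 0 ≤ C := hdC (2*n) k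
    -- the sum term
    set b : ℕ → ℝ := fun j => (u j t * derivative (u (2*n - j) t)).coeff (k+1) with hbdef
    have hBsum : (∑ j ∈ Finset.range (2*n + 1),
        derivative (u j t * derivative (u (2*n - j) t))).coeff k
        = ∑ j ∈ Finset.range (2*n + 1), b j * ((k : ℝ) + 1) := by
      rw [Polynomial.finset_sum_coeff]
      refine Finset.sum_congr rfl fun j _ => ?_
      rw [Polynomial.coeff_derivative]
    have hbnn : ∀ j, 0 ≤ b j :=
      fun j => kp_mul_coeff_nonneg (hnn j) (kp_deriv_coeff_nonneg (hnn _)) _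
    -- per-even-index lower bound
    have hkey : ∀ i ∈ Finset.range (n+1),
        ((k : ℝ) + 1) * (((n - i + 3 : ℕ)) : ℝ) * ε ^ (n+2) < b (2*i) * ((k:ℝ)+1) := by
      intro i hi
      have hin : i ≤ n := by simpa [Nat.lt_succ_iff] using hi
      obtain ⟨w, rfl⟩ : ∃ w, n = i + w := ⟨n - i, by omega⟩
      have hni : i + w - i = w := by omega
      set d2i := i * c + d₀ with hd2i
      set d2w := w * c + d₀ with hd2w
      have hd2w1 : 1 ≤ d2w := by omega
      have hsub : 2 * (i + w) - 2 * i = 2 * w := by omega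
      have hadd : d2i + (d2w - 1) = k + 1 := by
        rw [hd2i, hd2w, hkdef]
        have : (i + w + 1) * c = i * c + w * c + c := by ring
        omega
      have hstep1 : (u (2*i) t).coeff d2i * (derivative (u (2*w) t)).coeff (d2w - 1)
          ≤ b (2*i) := by
        rw [hbdef]
        simp only
        rw [← hadd, hsub]
        exact kp_mul_coeff_lb (hnn _) (kp_deriv_coeff_nonneg (hnn _)) _ _
      have hstep2 : (derivative (u (2*w) t)).coeff (d2w - 1)
          = (u (2*w) t).coeff d2w * (d2w : ℝ) := by
        rw [Polynomial.coeff_derivative]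
        have h1 : d2w - 1 + 1 = d2w := by omega
        rw [h1]
        congr 1
        exact_mod_cast congrArg (Nat.cast : ℕ → ℝ) h1
      -- strict pieces from the induction hypothesis
      have hIH1 : ε ^ (i+1) < (u (2*i) t).coeff d2i := IH i (by omega)
      have hIH2 : ε ^ (w+1) < (u (2*w) t).coeff d2w := IH w (by omega)
      have hd2wlb : ((w + 3 : ℕ) : ℝ) ≤ (d2w : ℝ) := by
        have : w + 3 ≤ d2w := by
          rw [hd2w]
          have : w * 1 ≤ w * c := Nat.mul_le_mul_left w hc1
          omega
        exact_mod_cast this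
      have hp1 : (0:ℝ) < ε ^ (i+1) := by positivity
      have hp2 : (0:ℝ) < ε ^ (w+1) := by positivity
      have hw3 : (0:ℝ) < ((w+3:ℕ):ℝ) := by positivity
      have hbound : (((w+3 : ℕ)):ℝ) * ε ^ (i + w + 2) < b (2*i) := by
        have hc2 : ε ^ (w+1) * (((w+3:ℕ)):ℝ) < (u (2*w) t).coeff d2w * (d2w:ℝ) := by
          nlinarith [hIH2, hd2wlb, hp2, hw3]
        have h1 : ε ^ (i+1) * (ε ^ (w+1) * (((w+3:ℕ)):ℝ))
            < (u (2*i) t).coeff d2i * ((u (2*w) t).coeff d2w * (d2w : ℝ)) := by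
          nlinarith [hIH1, hc2, hp1, mul_pos hp2 hw3]
        have h2 : (((w+3 : ℕ)):ℝ) * ε ^ (i + w + 2)
            = ε ^ (i+1) * (ε ^ (w+1) * (((w+3:ℕ)):ℝ)) := by
          rw [show i + w + 2 = (i+1)+(w+1) from by omega, pow_add]
          ring
        rw [h2]
        refine lt_of_lt_of_le (lt_of_lt_of_le h1 ?_) hstep1
        rw [hstep2]
      have hkpos : (0:ℝ) < (k:ℝ) + 1 := by positivity
      have hcast : (((i + w - i + 3 : ℕ)):ℝ) = ((w + 3 : ℕ) : ℝ) := by rw [hni]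
      calc ((k : ℝ) + 1) * (((i + w - i + 3 : ℕ)):ℝ) * ε ^ (i + w + 2)
          = ((k:ℝ)+1) * ((((w+3:ℕ)):ℝ) * ε ^ (i + w + 2)) := by rw [hcast]; ring
        _ < ((k:ℝ)+1) * b (2*i) := by exact (mul_lt_mul_iff_right₀ hkpos).2 hbound
        _ = b (2*i) * ((k:ℝ)+1) := by ring
    -- assemble
    push_cast at hrk
    have hQpos : (0:ℝ) < (2*(n:ℝ)+2)*(2*(n:ℝ)+1) := by positivity
    -- the even-index subsum is at most the full sum
    have himg : ∑ i ∈ Finset.range (n+1), b (2*i) * ((k:ℝ)+1)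
        = ∑ j ∈ (Finset.range (n+1)).image (fun i => 2*i), b j * ((k:ℝ)+1) := by
      rw [Finset.sum_image]
      intro x _ y _ h
      simp only at h
      omega
    have hsubset : (Finset.range (n+1)).image (fun i => 2*i) ⊆ Finset.range (2*n+1) := by
      intro j hj
      obtain ⟨i, hi, rfl⟩ := Finset.mem_image.1 hj
      have := Finset.mem_range.1 hi
      exact Finset.mem_range.2 (by omega)
    have hmono : ∑ i ∈ Finset.range (n+1), b (2*i) * ((k:ℝ)+1)
        ≤ ∑ j ∈ Finset.range (2*n+1), b j * ((k:ℝ)+1) := by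
      rw [himg]
      refine Finset.sum_le_sum_of_subset_of_nonneg hsubset fun j _ _ => ?_
      have := hbnn j
      positivity
    have hstrict : ∑ i ∈ Finset.range (n+1), ((k : ℝ) + 1) * (((n - i + 3 : ℕ)) : ℝ) * ε ^ (n+2)
        < ∑ i ∈ Finset.range (n+1), b (2*i) * ((k:ℝ)+1) :=
      Finset.sum_lt_sum_of_nonempty Finset.nonempty_range_add_one hkey
    -- nat arithmetic
    set S : ℕ := ∑ i ∈ Finset.range (n+1), (n - i + 3) with hSdef
    have hS1 : S = ∑ i ∈ Finset.range (n+1), (i + 3) := by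
      rw [hSdef, ← Finset.sum_range_reflect]
      refine Finset.sum_congr rfl fun i hi => ?_
      have := Finset.mem_range.1 hi
      omega
    have h2S : 2 * S = n*n + 7*n + 6 := by
      have hx := Finset.sum_range_id_mul_two (n+1)
      rw [hS1, Finset.sum_add_distrib, Finset.sum_const, Finset.card_range, smul_eq_mul]
      calc 2 * ((∑ i ∈ Finset.range (n+1), i) + (n+1) * 3)
          = (∑ i ∈ Finset.range (n+1), i) * 2 + 6*(n+1) := by ring
        _ = (n+1)*n + 6*(n+1) := by rw [hx, Nat.add_sub_cancel]
        _ = n*n + 7*n + 6 := by ring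
    have hk5 : n + 5 ≤ k + 1 := by
      have : (n+1)*1 ≤ (n+1)*c := Nat.mul_le_mul_left _ hc1
      omega
    have hcount : (2*n+2)*(2*n+1) ≤ (k+1) * S := by
      nlinarith [h2S, hk5, Nat.zero_le (n*n*n)]
    -- cast the sum lower bound
    have hsumeq : ∑ i ∈ Finset.range (n+1), ((k : ℝ) + 1) * (((n - i + 3 : ℕ)) : ℝ) * ε ^ (n+2)
        = ((k:ℝ)+1) * (S:ℝ) * ε ^ (n+2) := by
      have h1 : (∑ i ∈ Finset.range (n+1), ((k:ℝ)+1) * (((n - i + 3:ℕ)):ℝ) * ε^(n+2))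
          = ((k:ℝ)+1) * ε^(n+2) * ∑ i ∈ Finset.range (n+1), (((n - i + 3:ℕ)):ℝ) := by
        rw [Finset.mul_sum]
        exact Finset.sum_congr rfl fun i _ => by ring
      rw [h1, ← Nat.cast_sum, ← hSdef]
      ring
    have hlow : (2*(n:ℝ)+2)*(2*(n:ℝ)+1) * ε ^ (n+2)
        ≤ ∑ i ∈ Finset.range (n+1), ((k : ℝ) + 1) * (((n - i + 3 : ℕ)) : ℝ) * ε ^ (n+2) := by
      rw [hsumeq]
      have hcast : ((2*n+2)*(2*n+1) : ℝ) ≤ ((k:ℝ)+1) * (S:ℝ) := by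
        exact_mod_cast hcount
      have hε2 : (0:ℝ) ≤ ε ^ (n+2) := by positivity
      have := mul_le_mul_of_nonneg_right hcast hε2
      calc (2*(n:ℝ)+2)*(2*(n:ℝ)+1) * ε ^ (n+2)
          = ((2*n+2)*(2*n+1) : ℕ) * ε ^ (n+2) := by push_cast; ring
        _ ≤ ((k:ℝ)+1) * (S:ℝ) * ε ^ (n+2) := by
            refine mul_le_mul_of_nonneg_right ?_ hε2
            exact_mod_cast hcount
    -- conclude
    have hfinal : (2*(n:ℝ)+2)*(2*(n:ℝ)+1) * ε ^ (n+2)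
        < (2*(n:ℝ)+2)*(2*(n:ℝ)+1) * (u (2*n+2) t).coeff k := by
      calc (2*(n:ℝ)+2)*(2*(n:ℝ)+1) * ε ^ (n+2)
          ≤ ∑ i ∈ Finset.range (n+1), ((k : ℝ) + 1) * (((n - i + 3 : ℕ)) : ℝ) * ε ^ (n+2) := hlow
        _ < ∑ i ∈ Finset.range (n+1), b (2*i) * ((k:ℝ)+1) := hstrict
        _ ≤ ∑ j ∈ Finset.range (2*n+1), b j * ((k:ℝ)+1) := hmono
        _ = (∑ j ∈ Finset.range (2*n + 1),
              derivative (u j t * derivative (u (2*n - j) t))).coeff k := hBsum.symm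
        _ ≤ A + (∑ j ∈ Finset.range (2*n + 1),
              derivative (u j t * derivative (u (2*n - j) t))).coeff k + C := by linarith
        _ = (2*(n:ℝ)+2)*(2*(n:ℝ)+1) * (u (2*n+2) t).coeff k := hrk.symm
    have := (mul_lt_mul_iff_right₀ hQpos).1 hfinal
    rw [show 2*(n+1) = 2*n+2 from by ring]
    exact this

private lemma kp_chain
    (u : ℕ → ℝ → Polynomial ℝ) (t : ℝ)
    (hrec : ∀ n : ℕ, ∀ k : ℕ,
      ((n : ℝ) + 2) * ((n : ℝ) + 1) * (u (n + 2) t).coeff k =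
        (derivative (derivative (derivative (derivative (u n t))))).coeff k
          + (∑ j ∈ Finset.range (n + 1),
              derivative (u j t * derivative (u (n - j) t))).coeff k
          + deriv (fun s => (derivative (u n s)).coeff k) t)
    (hnn : ∀ n k, 0 ≤ (u n t).coeff k)
    (hdC : ∀ n k, 0 ≤ deriv (fun s => (derivative (u n s)).coeff k) t)
    (n₀ D : ℕ) (co : ℝ) (hco : 0 ≤ co)
    (hbase : co < (u n₀ t).coeff D) :
    ∀ j, 4 * j ≤ D →
      ((D.factorial * n₀.factorial : ℕ) : ℝ) /
        (((D - 4*j).factorial * (n₀ + 2*j).factorial : ℕ) : ℝ) * co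
        < (u (n₀ + 2*j) t).coeff (D - 4*j) := by
  intro j
  induction j with
  | zero =>
    intro _
    simp only [Nat.mul_zero, Nat.sub_zero, Nat.add_zero]
    have hne : (((D.factorial * n₀.factorial : ℕ)) : ℝ) ≠ 0 := by
      have := Nat.mul_pos D.factorial_pos n₀.factorial_pos
      exact_mod_cast this.ne'
    rw [div_self hne, one_mul]
    exact hbase
  | succ j ih =>
    intro hj4
    have ihj := ih (by omega)
    obtain ⟨a, hadef⟩ : ∃ a, D - 4*(j+1) = a := ⟨_, rfl⟩
    have haD : D - 4*j = a + 4 := by omega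
    have hrk := hrec (n₀ + 2*j) a
    rw [kp_coeff_d4] at hrk
    push_cast at hrk
    -- nonnegative terms
    have hB0 : 0 ≤ (∑ j' ∈ Finset.range (n₀ + 2*j + 1),
        derivative (u j' t * derivative (u (n₀ + 2*j - j') t))).coeff a := by
      rw [Polynomial.finset_sum_coeff]
      exact Finset.sum_nonneg fun j' _ =>
        kp_deriv_coeff_nonneg (kp_mul_coeff_nonneg (hnn _) (kp_deriv_coeff_nonneg (hnn _))) a
    have hC0 := hdC (n₀ + 2*j) a
    set P : ℝ := ((a:ℝ)+1)*((a:ℝ)+2)*((a:ℝ)+3)*((a:ℝ)+4) with hPdef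
    set Q : ℝ := ((n₀:ℝ)+2*(j:ℝ)+2)*((n₀:ℝ)+2*(j:ℝ)+1) with hQdef
    have hPpos : 0 < P := by rw [hPdef]; positivity
    have hQpos : 0 < Q := by rw [hQdef]; positivity
    have hstep : P * (u (n₀ + 2*j) t).coeff (a+4) ≤ Q * (u (n₀ + 2*j + 2) t).coeff a := by
      rw [hQdef]
      calc P * (u (n₀ + 2*j) t).coeff (a+4)
          ≤ (u (n₀ + 2*j) t).coeff (a+4) * (((a:ℝ)+1)*((a:ℝ)+2)*((a:ℝ)+3)*((a:ℝ)+4))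
            + (∑ j' ∈ Finset.range (n₀ + 2*j + 1),
                derivative (u j' t * derivative (u (n₀ + 2*j - j') t))).coeff a
            + deriv (fun s => (derivative (u (n₀ + 2*j) s)).coeff a) t := by
            rw [hPdef]; linarith
        _ = _ := hrk.symm
    -- factorial expansions
    have hfa : (((a+4).factorial : ℕ) : ℝ) = P * (a.factorial : ℝ) := by
      rw [show a+4 = a+3+1 from rfl, Nat.factorial_succ,
        show a+3 = a+2+1 from rfl, Nat.factorial_succ,
        show a+2 = a+1+1 from rfl, Nat.factorial_succ, Nat.factorial_succ, hPdef]
      push_cast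
      ring
    have hfn : (((n₀ + 2*(j+1)).factorial : ℕ) : ℝ) = Q * ((n₀ + 2*j).factorial : ℝ) := by
      rw [show n₀ + 2*(j+1) = (n₀ + 2*j + 1) + 1 from by omega, Nat.factorial_succ,
        Nat.factorial_succ, hQdef]
      push_cast
      ring
    have hfapos : (0:ℝ) < (a.factorial : ℝ) := by exact_mod_cast a.factorial_pos
    have hfnpos : (0:ℝ) < ((n₀ + 2*j).factorial : ℝ) := by
      exact_mod_cast (n₀ + 2*j).factorial_pos
    have hNpos : (0:ℝ) ≤ ((D.factorial * n₀.factorial : ℕ) : ℝ) := by positivity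
    -- the quotient identity
    have hQR : Q * (((D.factorial * n₀.factorial : ℕ) : ℝ) /
          (((D - 4*(j+1)).factorial * (n₀ + 2*(j+1)).factorial : ℕ) : ℝ) * co)
        = P * (((D.factorial * n₀.factorial : ℕ) : ℝ) /
          (((D - 4*j).factorial * (n₀ + 2*j).factorial : ℕ) : ℝ) * co) := by
      rw [haD, hadef]
      push_cast
      rw [hfa, hfn]
      field_simp
    -- conclude
    have hlt : Q * (((D.factorial * n₀.factorial : ℕ) : ℝ) /
          (((D - 4*(j+1)).factorial * (n₀ + 2*(j+1)).factorial : ℕ) : ℝ) * co)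
        < Q * (u (n₀ + 2*j + 2) t).coeff a := by
      rw [hQR]
      calc P * (((D.factorial * n₀.factorial : ℕ) : ℝ) /
            (((D - 4*j).factorial * (n₀ + 2*j).factorial : ℕ) : ℝ) * co)
          < P * (u (n₀ + 2*j) t).coeff (D - 4*j) := (mul_lt_mul_iff_right₀ hPpos).2 ihj
        _ = P * (u (n₀ + 2*j) t).coeff (a+4) := by rw [haD]
        _ ≤ Q * (u (n₀ + 2*j + 2) t).coeff a := hstep
    have := (mul_lt_mul_iff_right₀ hQpos).1 hlt
    rw [hadef, show n₀ + 2*(j+1) = n₀ + 2*j + 2 from by omega] at this ⊢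
    exact this



/-- **Factorial divergence for the KP recursion, case `3d₀ ≥ 2d₁ + 2` (Lemma 3.5(i)).**
For polynomials `uₙ` in `x` whose coefficients are real-analytic functions of `t`
with nonnegative Taylor coefficients at `t = 0`, satisfying the KP recursion,
if `u₀, u₁` have `x`-degrees `d₀, d₁` with `3d₀ ≥ 2d₁ + 2`, `d₀ ≥ 3`, and for all
`t > 0` the leading coefficients satisfy `c_{0,0}(t) > ε` and `c_{1,0}(t) > ε` for
some `0 < ε < 1`, then for every positive integer `q` and all `t > 0` the coefficient
`c_{10q, q(d₀+2)}(t)` of `x^{d_{10q} - q(d₀+2)}` in `u_{10q}` (with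
`d_{10q} = 5q(d₀-2)+d₀`) satisfies
`c_{10q, q(d₀+2)}(t) > (4q(d₀-2)+d₀)! (8q)! / ((4q(d₀-3)+d₀)! (10q)!) · ε^{4q+1}`,
a factorially growing lower bound. -/
theorem kp_recursion_factorial_divergence_case_one
    (u : ℕ → ℝ → Polynomial ℝ)
    (hanalytic : ∀ n k, ∀ t : ℝ, AnalyticAt ℝ (fun s => (u n s).coeff k) t)
    (htaylor : ∀ n k m, 0 ≤ iteratedDeriv m (fun s => (u n s).coeff k) 0)
    (hrec : ∀ n : ℕ, ∀ t : ℝ, ∀ k : ℕ,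
      ((n : ℝ) + 2) * ((n : ℝ) + 1) * (u (n + 2) t).coeff k =
        (Polynomial.derivative (Polynomial.derivative (Polynomial.derivative
            (Polynomial.derivative (u n t))))).coeff k
          + (∑ j ∈ Finset.range (n + 1),
              Polynomial.derivative (u j t * Polynomial.derivative (u (n - j) t))).coeff k
          + deriv (fun s => (Polynomial.derivative (u n s)).coeff k) t)
    (d₀ d₁ : ℕ)
    (hdeg0 : ∀ t : ℝ, 0 < t → (u 0 t).natDegree = d₀)
    (hdeg1 : ∀ t : ℝ, 0 < t → (u 1 t).natDegree = d₁)
    (hcase : 2 * d₁ + 2 ≤ 3 * d₀) (hd₀ : 3 ≤ d₀)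
    (ε : ℝ) (hε0 : 0 < ε) (hε1 : ε < 1)
    (hlead0 : ∀ t : ℝ, 0 < t → ε < (u 0 t).coeff d₀)
    (hlead1 : ∀ t : ℝ, 0 < t → ε < (u 1 t).coeff d₁) :
    ∀ q : ℕ, 1 ≤ q → ∀ t : ℝ, 0 < t →
      ((4 * q * (d₀ - 2) + d₀).factorial * (8 * q).factorial : ℝ) /
          ((4 * q * (d₀ - 3) + d₀).factorial * (10 * q).factorial)
          * ε ^ (4 * q + 1)
        < (u (10 * q) t).coeff ((5 * q * (d₀ - 2) + d₀) - q * (d₀ + 2)) := by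
  intro q hq t ht
  -- nonnegativity of coefficients and their t-derivatives for t ≥ 0
  have hnn : ∀ n k, 0 ≤ (u n t).coeff k := by
    intro n k
    have := kp_global_nonneg (hanalytic n k) (htaylor n k) ht.le 0
    simpa using this
  have hd1 : ∀ n k, 0 ≤ deriv (fun s => (u n s).coeff k) t := by
    intro n k
    have := kp_global_nonneg (hanalytic n k) (htaylor n k) ht.le 1
    simpa [iteratedDeriv_one] using this
  have hdC : ∀ n k, 0 ≤ deriv (fun s => (derivative (u n s)).coeff k) t := by
    intro n k
    have heq : (fun s => (derivative (u n s)).coeff k)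
        = fun s => (u n s).coeff (k+1) * ((k:ℝ)+1) := by
      funext s
      exact Polynomial.coeff_derivative _ _
    rw [heq, deriv_mul_const ((hanalytic n (k+1) t).differentiableAt)]
    have := hd1 n (k+1)
    positivity
  have hrect : ∀ n : ℕ, ∀ k : ℕ,
      ((n : ℝ) + 2) * ((n : ℝ) + 1) * (u (n + 2) t).coeff k =
        (derivative (derivative (derivative (derivative (u n t))))).coeff k
          + (∑ j ∈ Finset.range (n + 1),
              derivative (u j t * derivative (u (n - j) t))).coeff k
          + deriv (fun s => (derivative (u n s)).coeff k) t := fun n k => hrec n t k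
  have evenB := kp_evenB u d₀ hd₀ ε hε0 t hrect hnn hdC (hlead0 t ht)
  obtain ⟨e, rfl⟩ : ∃ e, d₀ = e + 3 := ⟨d₀ - 3, by omega⟩
  have hr2 : e + 3 - 2 = e + 1 := rfl
  have hr3 : e + 3 - 3 = e := rfl
  simp only [hr2, hr3] at evenB ⊢
  -- base of the chain
  have hbase : ε ^ (4*q + 1) < (u (8*q) t).coeff (4*q*(e+1) + (e+3)) := by
    have hb := evenB (4*q)
    rw [show 2*(4*q) = 8*q from by ring] at hb
    have : (4*q) * (e+1) = 4*q*(e+1) := by ring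
    rw [this] at hb
    exact hb
  have h4q : 4*q ≤ 4*q*(e+1) + (e+3) := by
    have h : 4*q*(e+1) = 4*q*e + 4*q := by ring
    omega
  have main := kp_chain u t hrect hnn hdC (8*q) (4*q*(e+1) + (e+3)) (ε ^ (4*q+1))
    (by positivity) hbase q h4q
  have hD4 : 4*q*(e+1) + (e+3) - 4*q = 4*q*e + (e+3) := by
    have h : 4*q*(e+1) = 4*q*e + 4*q := by ring
    omega
  have h10 : 8*q + 2*q = 10*q := by omega
  rw [hD4, h10] at main
  have hIdx : 5*q*(e+1) + (e+3) - q*(e+3+2) = 4*q*e + (e+3) := by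
    have h : 5*q*(e+1) + (e+3) = q*(e+3+2) + (4*q*e + (e+3)) := by ring
    omega
  rw [hIdx]
  rw [show 4*q*e + (e+3) = 4*q*e + (e+3) from rfl]
  push_cast at main ⊢
  convert main using 2
end
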